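/- arXiv:2510.01570 — 6 statements merged into one kernel-verified Lean document; each statement's English description precedes it below -/
import Mathlib

section
/- The divergence of the vector field h(x)·ẋ, where h(I_H, I_L) = 1/(I_H·I_L) and ẋ is the bi-virus SIS mutation vector field, equals -β̂_H/I_L - q_LH/I_H² - β̂_L/I_H - q_HL/I_L², which is strictly negative for all (I_H, I_L) ∈ (0,1)². -/
/-! The Dulac function `1 / (I_H I_L)` cancels the bilinear growth terms, so each component of
`h · ẋ` is affine in its own variable plus `q / t`; differentiating, every term of the divergence
is minus a positive quantity. -/

lemma hasDerivAt_const_mul_add_div_sub {ℓ : ℝ → ℝ} {ℓ' x : ℝ} (a c d : ℝ)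
    (hℓ : HasDerivAt ℓ ℓ' x) (hx : x ≠ 0) :
    HasDerivAt (fun t => a * ℓ t + c / t - d) (a * ℓ' - c / x ^ 2) x := by
  have hdiv : HasDerivAt (fun t => c / t) (-(c / x ^ 2)) x := by
    simpa [div_eq_mul_inv] using (hasDerivAt_inv hx).const_mul c
  simpa [sub_eq_add_neg] using ((hℓ.const_mul a).add hdiv).sub_const d

theorem dulac_divergence_negative_general
    (βH βL γH γL qHL qLH : ℝ)
    (hβH : 0 < βH) (hβL : 0 < βL)
    (hqHL : 0 < qHL) (hqLH : 0 < qLH)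
    (IH IL : ℝ) (hIH : IH ∈ Set.Ioo (0:ℝ) 1) (hIL : IL ∈ Set.Ioo (0:ℝ) 1) :
    deriv (fun x : ℝ => βH / IL * (1 - x - IL) + qLH / x - (qHL + γH) / IL) IH
      + deriv (fun y : ℝ => βL / IH * (1 - IH - y) + qHL / y - (qLH + γL) / IH) IL
    = -(βH / IL) - qLH / IH ^ 2 - βL / IH - qHL / IL ^ 2 ∧
    -(βH / IL) - qLH / IH ^ 2 - βL / IH - qHL / IL ^ 2 < 0 := by
  obtain ⟨hIH, -⟩ := hIH
  obtain ⟨hIL, -⟩ := hIL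
  have hderivH := (hasDerivAt_const_mul_add_div_sub (βH / IL) qLH ((qHL + γH) / IL)
    (((hasDerivAt_id' IH).const_sub 1).sub_const IL) hIH.ne').deriv
  have hderivL := (hasDerivAt_const_mul_add_div_sub (βL / IH) qHL ((qLH + γL) / IH)
    ((hasDerivAt_id' IL).const_sub (1 - IH)) hIL.ne').deriv
  refine ⟨by rw [hderivH, hderivL]; ring, ?_⟩
  have : 0 < βH / IL + qLH / IH ^ 2 + βL / IH + qHL / IL ^ 2 := by positivity
  linarith

theorem dulac_divergence_negative
    (βH βL γH γL qHL qLH : ℝ)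
    (hβH : 0 < βH) (hβL : 0 < βL) (hγH : 0 < γH) (hγL : 0 < γL)
    (hqHL : 0 < qHL) (hqLH : 0 < qLH)
    (IH IL : ℝ) (hIH : IH ∈ Set.Ioo (0:ℝ) 1) (hIL : IL ∈ Set.Ioo (0:ℝ) 1) :
    deriv (fun x : ℝ => βH / IL * (1 - x - IL) + qLH / x - (qHL + γH) / IL) IH
      + deriv (fun y : ℝ => βL / IH * (1 - IH - y) + qHL / y - (qLH + γL) / IH) IL
    = -(βH / IL) - qLH / IH ^ 2 - βL / IH - qHL / IL ^ 2 ∧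
    -(βH / IL) - qLH / IH ^ 2 - βL / IH - qHL / IL ^ 2 < 0 :=
  dulac_divergence_negative_general βH βL γH γL qHL qLH hβH hβL hqHL hqLH IH IL hIH hIL
end

section
/- Under Assumption (max(q_LH + γ_L, q_HL + γ_H) ≤ min(β̂_H, β̂_L)), the trace of the Jacobian at the disease-free equilibrium, (β̂_H - γ_H - q_HL) + (β̂_L - γ_L - q_LH), is nonnegative; consequently the largest eigenvalue of the Jacobian is nonnegative. -/
/-! The off-diagonal mutation rates are nonnegative, so the discriminant `(a - d)² + 4 q_HL q_LH`
of the Jacobian is nonnegative and `(tr J + √disc J) / 2` is a real eigenvalue; it is at least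
`tr J / 2`, which is nonnegative under the assumption. -/

namespace Matrix

variable {K : Type*} [Field K]

theorem mem_spectrum_fin_two_iff (M : Matrix (Fin 2) (Fin 2) K) (μ : K) :
    μ ∈ spectrum K M ↔ μ ^ 2 - M.trace * μ + M.det = 0 := by
  simp [mem_spectrum_iff_isRoot_charpoly, charpoly_fin_two]

theorem discr_fin_two_of (a b c d : K) :
    (!![a, b; c, d]).discr = (a - d) ^ 2 + 4 * (b * c) := by
  rw [discr_fin_two, trace_fin_two_of, det_fin_two_of]
  ring

theorem half_trace_add_sqrt_discr_mem_spectrum (M : Matrix (Fin 2) (Fin 2) ℝ)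
    (hM : 0 ≤ M.discr) : (M.trace + √M.discr) / 2 ∈ spectrum ℝ M := by
  have hsq : √M.discr ^ 2 = M.trace ^ 2 - 4 * M.det := by
    rw [Real.sq_sqrt hM, discr_fin_two]
  rw [mem_spectrum_fin_two_iff]
  linear_combination hsq / 4

end Matrix

theorem dfe_jacobian_trace_nonneg_general
    (βH βL γH γL qHL qLH : ℝ)
    (hqHL : 0 ≤ qHL) (hqLH : 0 ≤ qLH)
    (hassump : max (qLH + γL) (qHL + γH) ≤ min βH βL) :
    (βH - γH - qHL) + (βL - γL - qLH) ≥ 0 ∧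
    ∃ μ : ℝ, μ ∈ spectrum ℝ
        (Matrix.of ![![βH - γH - qHL, qLH], ![qHL, βL - γL - qLH]]) ∧ 0 ≤ μ := by
  have hH : qHL + γH ≤ βH := (le_max_right _ _).trans (hassump.trans (min_le_left _ _))
  have hL : qLH + γL ≤ βL := (le_max_left _ _).trans (hassump.trans (min_le_right _ _))
  have htrace : (βH - γH - qHL) + (βL - γL - qLH) ≥ 0 := by linarith
  have hdiscr : 0 ≤ (!![βH - γH - qHL, qLH; qHL, βL - γL - qLH]).discr := by
    rw [Matrix.discr_fin_two_of]
    positivity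
  refine ⟨htrace, _, Matrix.half_trace_add_sqrt_discr_mem_spectrum _ hdiscr, ?_⟩
  rw [Matrix.trace_fin_two_of]
  have hsqrt := Real.sqrt_nonneg (!![βH - γH - qHL, qLH; qHL, βL - γL - qLH]).discr
  linarith

theorem dfe_jacobian_trace_nonneg
    (βH βL γH γL qHL qLH : ℝ)
    (hβH : 0 < βH) (hβL : 0 < βL) (hγH : 0 < γH) (hγL : 0 < γL)
    (hqHL : 0 ≤ qHL) (hqLH : 0 ≤ qLH)
    (hassump : max (qLH + γL) (qHL + γH) ≤ min βH βL) :
    (βH - γH - qHL) + (βL - γL - qLH) ≥ 0 ∧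
    ∃ μ : ℝ, μ ∈ spectrum ℝ
        (Matrix.of ![![βH - γH - qHL, qLH], ![qHL, βL - γL - qLH]]) ∧ 0 ≤ μ :=
  dfe_jacobian_trace_nonneg_general βH βL γH γL qHL qLH hqHL hqLH hassump
end

section
/- When mutation occurs only from strain L to strain H (q_HL = 0, q_LH > 0), under the assumption β_H/γ_H > β_L/γ_L, there is no coexistence equilibrium: the candidate point with I_H* = q_LH·N/(w·D₂) and I_L* = -N·(D₂ + β_L·q_LH)/(β̂_L·D₂), where N = γ_L + q_LH - β̂_L and D₂ = β_H·γ_L - β_L·γ_H + β_H·q_LH - β_L·q_LH, cannot have both I_H* > 0 and I_L* > 0. -/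
/-! Both candidate values are multiples of the single quantity `N / (w * D₂)`: `I_H*` with the
positive factor `q_LH`, and `I_L*` with the factor `-(D₂ + β_L q_LH) / β_L`. Since
`D₂ + β_L q_LH = (β_H γ_L - β_L γ_H) + β_H q_LH` is positive exactly because `β_H/γ_H > β_L/γ_L`,
that second factor is negative, so the two values cannot both be positive. -/

theorem not_pos_mul_and_pos_neg_mul {R : Type*} [Ring R] [LinearOrder R] [IsStrictOrderedRing R]
    {a b x : R} (ha : 0 < a) (hb : 0 < b) : ¬ (0 < a * x ∧ 0 < -x * b) := by
  rintro ⟨hax, hxb⟩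
  have hx : 0 < x := pos_of_mul_pos_right hax ha.le
  have : -x * b < 0 := mul_neg_of_neg_of_pos (neg_neg_of_pos hx) hb
  exact this.not_gt hxb

theorem cross_mul_lt_of_div_lt_div {βH βL γH γL : ℝ} (hγH : 0 < γH) (hγL : 0 < γL)
    (hrepro : βL / γL < βH / γH) : βL * γH < βH * γL := by
  rw [div_lt_div_iff₀ hγL hγH] at hrepro
  linarith

theorem no_coexistence_L_to_H_general
    (βH βL γH γL qLH : ℝ)
    (hβH : 0 < βH) (hβL : 0 < βL) (hγH : 0 < γH) (hγL : 0 < γL)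
    (hqLH : 0 < qLH)
    (hrepro : βH / γH > βL / γL)
    (w : ℝ)
    (βLhat : ℝ) (hβLhat : βLhat = βL * w)
    (N D2 : ℝ)
    (hD2 : D2 = βH * γL - βL * γH + βH * qLH - βL * qLH) :
    ¬ (0 < qLH * N / (w * D2) ∧ 0 < -N * (D2 + βL * qLH) / (βLhat * D2)) := by
  have hgap : 0 < (D2 + βL * qLH) / βL := by
    have hcross := cross_mul_lt_of_div_lt_div hγH hγL hrepro
    have : 0 < D2 + βL * qLH := by rw [hD2]; linarith [mul_pos hβH hqLH]
    positivity
  have hIL : -N * (D2 + βL * qLH) / (βLhat * D2)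
      = -(N / (w * D2)) * ((D2 + βL * qLH) / βL) := by
    rw [hβLhat]; ring
  rw [mul_div_assoc, hIL]
  exact not_pos_mul_and_pos_neg_mul hqLH hgap

theorem no_coexistence_L_to_H
    (βH βL γH γL qLH α zS : ℝ)
    (hβH : 0 < βH) (hβL : 0 < βL) (hγH : 0 < γH) (hγL : 0 < γL)
    (hqLH : 0 < qLH) (hα : α ∈ Set.Ioo (0:ℝ) 1) (hzS : zS ∈ Set.Icc (0:ℝ) 1)
    (hrepro : βH / γH > βL / γL)
    (w : ℝ) (hw : w = α * zS + 1 - zS)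
    (βLhat : ℝ) (hβLhat : βLhat = βL * w)
    (N D2 : ℝ) (hN : N = γL + qLH - βLhat)
    (hD2 : D2 = βH * γL - βL * γH + βH * qLH - βL * qLH) (hD2ne : D2 ≠ 0) :
    ¬ (0 < qLH * N / (w * D2) ∧ 0 < -N * (D2 + βL * qLH) / (βLhat * D2)) :=
  no_coexistence_L_to_H_general βH βL γH γL qLH hβH hβL hγH hγL hqLH hrepro w βLhat hβLhat N D2 hD2
end

section
/- For uni-directional mutation from H to L (q_LH = 0), the point E₃ = (S*, I_H*, I_L*) with S* = (γ_H + q_HL)/β̂_H, I_H* = N_H·(-D₁ + β_H·q_HL)/(β̂_H·D₁), and I_L* = -q_HL·N_H/(w·D₁), where N_H = γ_H + q_HL - β̂_H and D₁ = β_H·γ_L - β_L·γ_H + (β_H - β_L)·q_HL, is an equilibrium of the dynamics: both dI_H/dt and dI_L/dt vanish at this point. -/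
/-! At E₃ the susceptible fraction `1 - I_H - I_L` equals `S* = (γ_H + q_HL)/β̂_H`, because
`I_H + I_L = -N_H/β̂_H`. This makes the net growth rate `β̂_H S* - (q_HL + γ_H)` of the `H` class
vanish, which settles the first equation. For the second, the net rate of the `L` class at `S*` is
`β̂_L S* - γ_L = (β_H q_HL - D₁)/β_H`, and this exactly cancels the mutation inflow
`q_HL I_H = q_HL N_H (β_H q_HL - D₁)/(β̂_H D₁)` against `I_L = -q_HL N_H/(w D₁)`. -/

namespace UnidirectionalMutation

variable {βH βL γH γL qHL w : ℝ}

lemma infected_sum_eq (hβH : βH ≠ 0) (hw : w ≠ 0) {D : ℝ} (hD : D ≠ 0) (N : ℝ) :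
    N * (-D + βH * qHL) / (βH * w * D) + -qHL * N / (w * D) = -N / (βH * w) := by
  field_simp
  ring

lemma susceptible_eq (hβH : βH ≠ 0) (hw : w ≠ 0) {D : ℝ} (hD : D ≠ 0) :
    let N := γH + qHL - βH * w
    1 - N * (-D + βH * qHL) / (βH * w * D) - -qHL * N / (w * D) = (γH + qHL) / (βH * w) := by
  intro N
  rw [sub_sub, infected_sum_eq hβH hw hD]
  field_simp
  ring

lemma low_class_net_rate_eq (hβH : βH ≠ 0) (hw : w ≠ 0) :
    βL * w * ((γH + qHL) / (βH * w)) - γL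
      = (βH * qHL - (βH * γL - βL * γH + (βH - βL) * qHL)) / βH := by
  field_simp
  ring

end UnidirectionalMutation

open UnidirectionalMutation in
theorem E3_is_equilibrium_general
    (βH βL γH γL qHL : ℝ)
    (hβH : 0 < βH)
    (w : ℝ) (hwpos : 0 < w)
    (βHhat βLhat : ℝ) (hβHhat : βHhat = βH * w) (hβLhat : βLhat = βL * w)
    (NH D1 : ℝ) (hNH : NH = γH + qHL - βHhat)
    (hD1 : D1 = βH * γL - βL * γH + (βH - βL) * qHL) (hD1ne : D1 ≠ 0)
    (IH IL : ℝ)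
    (hIH : IH = NH * (-D1 + βH * qHL) / (βHhat * D1))
    (hIL : IL = -qHL * NH / (w * D1)) :
    βHhat * IH * (1 - IH - IL) - (qHL + γH) * IH = 0 ∧
    βLhat * IL * (1 - IH - IL) + qHL * IH - γL * IL = 0 := by
  have hβH₀ : βH ≠ 0 := hβH.ne'
  have hw₀ : w ≠ 0 := hwpos.ne'
  have hS : 1 - IH - IL = (γH + qHL) / (βH * w) := by
    subst hIH hIL hNH hβHhat
    exact susceptible_eq hβH₀ hw₀ hD1ne
  rw [hS]
  subst hβHhat hβLhat
  constructor
  · field_simp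
    ring
  · have hL : βL * w * IL * ((γH + qHL) / (βH * w)) - γL * IL
        = IL * ((βH * qHL - D1) / βH) := by
      rw [hD1, ← low_class_net_rate_eq hβH₀ hw₀]
      ring
    rw [add_sub_right_comm, hL, hIH, hIL, hNH]
    field_simp
    ring

theorem E3_is_equilibrium
    (βH βL γH γL qHL α zS : ℝ)
    (hβH : 0 < βH) (hβL : 0 < βL) (hγH : 0 < γH) (hγL : 0 < γL)
    (hqHL : 0 < qHL)
    (w : ℝ) (hw : w = α * zS + 1 - zS) (hwpos : 0 < w)
    (βHhat βLhat : ℝ) (hβHhat : βHhat = βH * w) (hβLhat : βLhat = βL * w)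
    (NH D1 : ℝ) (hNH : NH = γH + qHL - βHhat)
    (hD1 : D1 = βH * γL - βL * γH + (βH - βL) * qHL) (hD1ne : D1 ≠ 0)
    (IH IL : ℝ)
    (hIH : IH = NH * (-D1 + βH * qHL) / (βHhat * D1))
    (hIL : IL = -qHL * NH / (w * D1)) :
    βHhat * IH * (1 - IH - IL) - (qHL + γH) * IH = 0 ∧
    βLhat * IL * (1 - IH - IL) + qHL * IH - γL * IL = 0 :=
  E3_is_equilibrium_general βH βL γH γL qHL hβH w hwpos βHhat βLhat hβHhat hβLhat NH D1 hNH hD1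
    hD1ne IH IL hIH hIL
end

section
/- For uni-directional mutation from H to L, the coexistence equilibrium E₃ has both infected proportions strictly positive if and only if β̂_H/(γ_H + q_HL) > 1 and q_HL < β_H·γ_L/β_L - γ_H. -/
/-!
Since `D₁ > 0` and `β̂_H > 0`, the sign of `I_L*` is that of `-N_H`, so `I_L* > 0` says exactly
`β̂_H > γ_H + q_HL`. Given `N_H < 0`, the sign of `I_H*` is that of `D₁ - β_H q_HL`, and
`β_H q_HL - D₁ = β_L (γ_H + q_HL) - β_H γ_L`, which is negative exactly when
`q_HL < β_H γ_L / β_L - γ_H`.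
-/

theorem coexistence_iff_general
    (βH βL γH γL qHL w : ℝ)
    (hβ : βH > βL) (hβL : 0 < βL) (hγH : 0 < γH)
    (hqHL : 0 < qHL) (hw : 0 < w)
    (hrepro : βH * γL > βL * γH)
    (βHhat : ℝ) (hβHhat : βHhat = βH * w)
    (NH D1 : ℝ) (hNH : NH = γH + qHL - βHhat)
    (hD1 : D1 = βH * γL - βL * γH + (βH - βL) * qHL)
    (IH IL : ℝ)
    (hIH : IH = NH * (-D1 + βH * qHL) / (βHhat * D1))
    (hIL : IL = -qHL * NH / (w * D1)) :
    (0 < IH ∧ 0 < IL) ↔ (βHhat / (γH + qHL) > 1 ∧ qHL < βH * γL / βL - γH) := by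
  have hD1_pos : 0 < D1 := by
    rw [hD1]; linarith [mul_pos (sub_pos.2 hβ) hqHL]
  have hβHhat_pos : 0 < βHhat := by
    rw [hβHhat]; exact mul_pos (hβL.trans hβ) hw
  have hIL_pos : 0 < IL ↔ NH < 0 := by
    rw [hIL, div_pos_iff_of_pos_right (mul_pos hw hD1_pos), neg_mul, neg_pos]
    exact smul_neg_iff_of_pos_left hqHL
  have hIH_pos (hNH_neg : NH < 0) : 0 < IH ↔ -D1 + βH * qHL < 0 := by
    rw [hIH, div_pos_iff_of_pos_right (mul_pos hβHhat_pos hD1_pos)]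
    exact smul_pos_iff_of_neg_left hNH_neg
  have hNH_neg : NH < 0 ↔ βHhat / (γH + qHL) > 1 := by
    rw [gt_iff_lt, one_lt_div (by positivity), hNH, sub_neg]
  have hmutation : -D1 + βH * qHL < 0 ↔ qHL < βH * γL / βL - γH := by
    rw [lt_sub_iff_add_lt, lt_div_iff₀ hβL, hD1]
    constructor <;> intro <;> linarith
  rw [← hNH_neg, ← hmutation, hIL_pos, and_comm]
  exact and_congr_right hIH_pos

theorem coexistence_iff
    (βH βL γH γL qHL w : ℝ)
    (hβ : βH > βL) (hβL : 0 < βL) (hγH : 0 < γH) (hγL : 0 < γL)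
    (hqHL : 0 < qHL) (hw : 0 < w)
    (hrepro : βH * γL > βL * γH)
    (βHhat : ℝ) (hβHhat : βHhat = βH * w)
    (NH D1 : ℝ) (hNH : NH = γH + qHL - βHhat)
    (hD1 : D1 = βH * γL - βL * γH + (βH - βL) * qHL)
    (IH IL : ℝ)
    (hIH : IH = NH * (-D1 + βH * qHL) / (βHhat * D1))
    (hIL : IL = -qHL * NH / (w * D1)) :
    (0 < IH ∧ 0 < IL) ↔ (βHhat / (γH + qHL) > 1 ∧ qHL < βH * γL / βL - γH) :=
  coexistence_iff_general βH βL γH γL qHL w hβ hβL hγH hqHL hw hrepro βHhat hβHhat NH D1 hNH hD1 IH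
    IL hIH hIL
end

section
/- For a 2×2 matrix M = Λ + N, where Λ is diagonal with strictly negative entries and N is an irreducible nonnegative matrix, the stability modulus of M is strictly negative if and only if the spectral radius of -Λ⁻¹·N is strictly less than 1. -/
/-!
Both matrices have real spectrum: the characteristic polynomial of a real 2 × 2 matrix
`M` is `(x - M₀₀)(x - M₁₁) - M₀₁M₁₀`, whose roots are real once `M₀₁M₁₀ ≥ 0`. For such a
quadratic, all roots lie below `t` iff `M₀₀ < t`, `M₁₁ < t` and `M₀₁M₁₀ < (t - M₀₀)(t - M₁₁)`;
if moreover the diagonal is nonnegative, the largest root dominates the absolute value of the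
other one, so the same conditions characterise a spectral radius below `t`. Applied to
`Λ + N` with `t = 0` and to `-Λ⁻¹N = 1 - Λ⁻¹(Λ + N)` with `t = 1`, the two sets of conditions
differ only by dividing row `i` by `dᵢ < 0`.
-/

open Matrix

theorem Complex.im_eq_zero_of_sub_mul_sub_eq {p q c : ℝ} (hc : 0 ≤ c) {μ : ℂ}
    (h : (μ - p) * (μ - q) = c) : μ.im = 0 := by
  have hre := congrArg Complex.re h
  have him := congrArg Complex.im h
  simp only [Complex.mul_re, Complex.mul_im, Complex.sub_re, Complex.sub_im,
    Complex.ofReal_re, Complex.ofReal_im, sub_zero] at hre him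
  by_contra hne
  have hmid : 2 * μ.re = p + q := by
    have : μ.im * (2 * μ.re - p - q) = 0 := by linarith
    linarith [(mul_eq_zero.1 this).resolve_left hne]
  have : 0 < μ.im ^ 2 := by positivity
  nlinarith [sq_nonneg (p - q)]

theorem forall_sub_mul_sub_eq_imp_lt_iff {p q c : ℝ} (hc : 0 ≤ c) (t : ℝ) :
    (∀ x, (x - p) * (x - q) = c → x < t) ↔ p < t ∧ q < t ∧ c < (t - p) * (t - q) := by
  constructor
  · intro h
    set r := (p + q + √((p - q) ^ 2 + 4 * c)) / 2
    have hsq : √((p - q) ^ 2 + 4 * c) ^ 2 = (p - q) ^ 2 + 4 * c := Real.sq_sqrt (by positivity)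
    have hge : |p - q| ≤ √((p - q) ^ 2 + 4 * c) := Real.abs_le_sqrt (by nlinarith)
    have hr : (r - p) * (r - q) = c := by simp only [r]; nlinarith
    have hrt := h r hr
    have hrp : p ≤ r := by simp only [r]; linarith [le_abs_self (p - q), neg_abs_le (p - q)]
    have hrq : q ≤ r := by simp only [r]; linarith [le_abs_self (p - q), neg_abs_le (p - q)]
    refine ⟨by linarith, by linarith, ?_⟩
    rw [← hr]
    exact mul_lt_mul'' (by linarith) (by linarith) (by linarith) (by linarith)
  · rintro ⟨hp, hq, hpq⟩ x hx
    by_contra! hxt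
    have : (t - p) * (t - q) ≤ (x - p) * (x - q) :=
      mul_le_mul (by linarith) (by linarith) (by linarith) (by linarith)
    linarith

theorem forall_sub_mul_sub_eq_imp_abs_lt_iff {p q c : ℝ} (hp : 0 ≤ p) (hq : 0 ≤ q) (hc : 0 ≤ c)
    (t : ℝ) :
    (∀ x, (x - p) * (x - q) = c → |x| < t) ↔ p < t ∧ q < t ∧ c < (t - p) * (t - q) := by
  rw [← forall_sub_mul_sub_eq_imp_lt_iff hc]
  refine ⟨fun h x hx => (le_abs_self x).trans_lt (h x hx), fun h x hx => abs_lt.2 ⟨?_, h x hx⟩⟩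
  obtain ⟨hpt, hqt, hpq⟩ := (forall_sub_mul_sub_eq_imp_lt_iff hc t).1 h
  by_contra! hxt
  have : (t + p) * (t + q) ≤ (x - p) * (x - q) := by nlinarith
  nlinarith

namespace Matrix

theorem inv_diagonal_mul_apply {n K : Type*} [Fintype n] [DecidableEq n] [Field K] (d : n → K)
    (hd : ∀ i, d i ≠ 0) (N : Matrix n n K) (i j : n) :
    ((diagonal d)⁻¹ * N) i j = N i j / d i := by
  have hinv : (diagonal d)⁻¹ = diagonal d⁻¹ := by
    refine inv_eq_left_inv ?_
    rw [diagonal_mul_diagonal, ← diagonal_one]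
    exact congrArg _ (funext fun i => inv_mul_cancel₀ (hd i))
  simp [hinv, div_eq_inv_mul]

theorem mem_spectrum_map_ofReal_fin_two_iff (M : Matrix (Fin 2) (Fin 2) ℝ) (μ : ℂ) :
    μ ∈ spectrum ℂ (M.map (Complex.ofReal ·)) ↔
      (μ - M 0 0) * (μ - M 1 1) = ((M 0 1 * M 1 0 : ℝ) : ℂ) := by
  rw [spectrum.mem_iff, isUnit_iff_isUnit_det, isUnit_iff_ne_zero, not_ne_iff, det_fin_two,
    sub_eq_zero]
  simp [algebraMap_matrix_apply]

theorem spectrum_map_ofReal_fin_two (M : Matrix (Fin 2) (Fin 2) ℝ) (hM : 0 ≤ M 0 1 * M 1 0) :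
    spectrum ℂ (M.map (Complex.ofReal ·)) =
      Complex.ofReal '' {x | (x - M 0 0) * (x - M 1 1) = M 0 1 * M 1 0} := by
  ext μ
  rw [mem_spectrum_map_ofReal_fin_two_iff]
  constructor
  · intro h
    have hμ : (μ.re : ℂ) = μ := Complex.ext rfl (Complex.im_eq_zero_of_sub_mul_sub_eq hM h).symm
    refine ⟨μ.re, ?_, hμ⟩
    rw [← hμ] at h
    exact_mod_cast h
  · rintro ⟨x, hx, rfl⟩
    exact_mod_cast hx

theorem forall_spectrum_map_ofReal_re_lt_iff (M : Matrix (Fin 2) (Fin 2) ℝ)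
    (hM : 0 ≤ M 0 1 * M 1 0) (t : ℝ) :
    (∀ μ ∈ spectrum ℂ (M.map (Complex.ofReal ·)), μ.re < t) ↔
      M 0 0 < t ∧ M 1 1 < t ∧ M 0 1 * M 1 0 < (t - M 0 0) * (t - M 1 1) := by
  simp only [M.spectrum_map_ofReal_fin_two hM, Set.forall_mem_image, Complex.ofReal_re]
  exact forall_sub_mul_sub_eq_imp_lt_iff hM t

theorem forall_spectrum_map_ofReal_norm_lt_iff (M : Matrix (Fin 2) (Fin 2) ℝ)
    (h₀ : 0 ≤ M 0 0) (h₁ : 0 ≤ M 1 1) (hM : 0 ≤ M 0 1 * M 1 0) (t : ℝ) :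
    (∀ μ ∈ spectrum ℂ (M.map (Complex.ofReal ·)), ‖μ‖ < t) ↔
      M 0 0 < t ∧ M 1 1 < t ∧ M 0 1 * M 1 0 < (t - M 0 0) * (t - M 1 1) := by
  simp only [M.spectrum_map_ofReal_fin_two hM, Set.forall_mem_image, Complex.norm_real,
    Real.norm_eq_abs]
  exact forall_sub_mul_sub_eq_imp_abs_lt_iff h₀ h₁ hM t

end Matrix

theorem stability_modulus_iff_spectral_radius_general
    (Λ N : Matrix (Fin 2) (Fin 2) ℝ)
    (d : Fin 2 → ℝ) (hΛ : Λ = Matrix.diagonal d) (hd : ∀ i, d i < 0)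
    (hN : ∀ i j, 0 ≤ N i j) :
    ((∀ μ : ℂ, μ ∈ spectrum ℂ ((Λ + N).map (Complex.ofReal ·)) → μ.re < 0) ↔
      (∀ μ : ℂ, μ ∈ spectrum ℂ ((-(Λ⁻¹ * N)).map (Complex.ofReal ·)) →
        ‖μ‖ < 1)) := by
  subst hΛ
  have hA : ∀ i j, (-((diagonal d)⁻¹ * N)) i j = -(N i j / d i) := fun i j => by
    rw [neg_apply, inv_diagonal_mul_apply d fun i => (hd i).ne]
  have hA_nonneg : ∀ i j, 0 ≤ (-((diagonal d)⁻¹ * N)) i j := fun i j => by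
    rw [hA]
    exact neg_nonneg.2 (div_nonpos_of_nonneg_of_nonpos (hN i j) (hd i).le)
  have hdiag : ∀ i, -(N i i / d i) < 1 ↔ d i + N i i < 0 := fun i => by
    rw [← div_neg, div_lt_one (neg_pos.2 (hd i))]
    constructor <;> intro <;> linarith
  have hdet : -(N 0 1 / d 0) * -(N 1 0 / d 1) < (1 - -(N 0 0 / d 0)) * (1 - -(N 1 1 / d 1)) ↔
      N 0 1 * N 1 0 < (0 - (d 0 + N 0 0)) * (0 - (d 1 + N 1 1)) := by
    have h₀ := (hd 0).ne
    have h₁ := (hd 1).ne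
    rw [show -(N 0 1 / d 0) * -(N 1 0 / d 1) = N 0 1 * N 1 0 / (d 0 * d 1) by field_simp,
      show (1 - -(N 0 0 / d 0)) * (1 - -(N 1 1 / d 1)) =
        (0 - (d 0 + N 0 0)) * (0 - (d 1 + N 1 1)) / (d 0 * d 1) by field_simp; ring,
      div_lt_div_iff_of_pos_right (mul_pos_of_neg_of_neg (hd 0) (hd 1))]
  have hM₀₁ : (diagonal d + N) 0 1 = N 0 1 := by simp
  have hM₁₀ : (diagonal d + N) 1 0 = N 1 0 := by simp
  rw [(diagonal d + N).forall_spectrum_map_ofReal_re_lt_iff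
      (by rw [hM₀₁, hM₁₀]; exact mul_nonneg (hN 0 1) (hN 1 0)),
    (-((diagonal d)⁻¹ * N)).forall_spectrum_map_ofReal_norm_lt_iff (hA_nonneg 0 0)
      (hA_nonneg 1 1) (mul_nonneg (hA_nonneg 0 1) (hA_nonneg 1 0))]
  simp only [Matrix.add_apply, diagonal_apply_eq, hM₀₁, hM₁₀, hA, hdiag, hdet]

theorem stability_modulus_iff_spectral_radius
    (Λ N : Matrix (Fin 2) (Fin 2) ℝ)
    (d : Fin 2 → ℝ) (hΛ : Λ = Matrix.diagonal d) (hd : ∀ i, d i < 0)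
    (hN : ∀ i j, 0 ≤ N i j) (hirr : 0 < N 0 1 ∧ 0 < N 1 0) :
    ((∀ μ : ℂ, μ ∈ spectrum ℂ ((Λ + N).map (Complex.ofReal ·)) → μ.re < 0) ↔
      (∀ μ : ℂ, μ ∈ spectrum ℂ ((-(Λ⁻¹ * N)).map (Complex.ofReal ·)) →
        ‖μ‖ < 1)) :=
  stability_modulus_iff_spectral_radius_general Λ N d hΛ hd hN
end
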